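/- arXiv:2312.17571 — 6 statements merged into one kernel-verified Lean document; each statement's English description precedes it below -/
import Mathlib

section
/- Let α1 be the real root and α2, α3 the complex roots of x^3 - x^2 - 1, and a1 = α1/((α1-α2)(α1-α3)). Then for all n ≥ 1, |N_n - a1·α1^n| < α1^{-n/2}. -/
def narayana : ℕ → ℕ
  | 0 => 0
  | 1 => 1
  | 2 => 1
  | n + 3 => narayana (n + 2) + narayana n

lemma binet_aux (x1 x2 x3 b1 b2 b3 : ℂ)
    (hx1 : x1 ^ 3 = x1 ^ 2 + 1) (hx2 : x2 ^ 3 = x2 ^ 2 + 1) (hx3 : x3 ^ 3 = x3 ^ 2 + 1)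
    (e0 : b1 + b2 + b3 = 0) (e1 : b1 * x1 + b2 * x2 + b3 * x3 = 1)
    (e2 : b1 * x1 ^ 2 + b2 * x2 ^ 2 + b3 * x3 ^ 2 = 1) :
    ∀ n : ℕ, ((narayana n : ℕ) : ℂ) = b1 * x1 ^ n + b2 * x2 ^ n + b3 * x3 ^ n := by
  intro n
  induction n using Nat.strong_induction_on with
  | _ n ih =>
    match n with
    | 0 => simpa [narayana] using e0.symm
    | 1 => simpa [narayana] using e1.symm
    | 2 => simpa [narayana] using e2.symm
    | (m + 3) =>
      have i2 := ih (m + 2) (by omega)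
      have i0 := ih m (by omega)
      have hrec : ((narayana (m + 3) : ℕ) : ℂ) = (narayana (m + 2) : ℕ) + ((narayana m : ℕ) : ℂ) := by
        simp [narayana]
      rw [hrec, i2, i0]
      linear_combination (-(b1 * x1 ^ m)) * hx1 - (b2 * x2 ^ m) * hx2 - (b3 * x3 ^ m) * hx3

set_option maxHeartbeats 2000000 in
theorem narayana_error_bound (α1 : ℝ) (α2 α3 : ℂ)
    (h1 : α1 ^ 3 = α1 ^ 2 + 1)
    (h2 : α2 ^ 3 = α2 ^ 2 + 1) (h3 : α3 ^ 3 = α3 ^ 2 + 1)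
    (h2im : α2.im ≠ 0) (h23 : α3 = starRingEnd ℂ α2)
    (a1 : ℝ)
    (ha1 : (a1 : ℂ) = (α1 : ℂ) / (((α1 : ℂ) - α2) * ((α1 : ℂ) - α3))) :
    ∀ n : ℕ, 1 ≤ n →
      |(narayana n : ℝ) - a1 * α1 ^ n| < α1 ^ (-(n : ℝ) / 2) := by
  have hpos : 0 < α1 := by nlinarith [sq_nonneg α1, sq_nonneg (α1 - 1), sq_nonneg (α1 + 1)]
  have hgt1 : 1 < α1 := by nlinarith [sq_nonneg α1]
  have hlb : 1.46 < α1 := by nlinarith [sq_nonneg (α1 - 1.46), sq_nonneg (α1 - 1)]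
  have hub : α1 < 1.47 := by nlinarith [sq_nonneg (α1 - 1.47), sq_nonneg (α1 - 1)]
  -- structure of α2
  have hroot : α2.re = (1 - α1) / 2 ∧ Complex.normSq α2 = α1 ^ 2 - α1 := by
    set s : ℝ := 2 * α2.re with hsdef
    set p : ℝ := Complex.normSq α2 with hpdef
    have hs : α2 + α3 = (s : ℂ) := by rw [h23]; exact Complex.add_conj α2
    have hp : α2 * α3 = (p : ℂ) := by rw [h23]; exact Complex.mul_conj α2
    have hq : α2 ^ 2 = (s : ℂ) * α2 - (p : ℂ) := by rw [← hs, ← hp]; ring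
    have hlin : ((s ^ 2 - p - s : ℝ) : ℂ) * α2 = ((s * p - p + 1 : ℝ) : ℂ) := by
      push_cast
      linear_combination h2 - (α2 + (s : ℂ) - 1) * hq
    have him : (s ^ 2 - p - s) * α2.im = 0 := by
      have := congrArg Complex.im hlin
      simpa [Complex.mul_im, ← Complex.ofReal_pow] using this
    have hA : s ^ 2 - p - s = 0 := by
      rcases mul_eq_zero.mp him with h | h
      · exact h
      · exact absurd h h2im
    have hre : (s ^ 2 - p - s) * α2.re = s * p - p + 1 := by
      have := congrArg Complex.re hlin
      simpa [Complex.mul_re, ← Complex.ofReal_pow] using this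
    have hB : s * p - p + 1 = 0 := by rw [hA] at hre; linarith
    have ht : (1 - s) ^ 3 = (1 - s) ^ 2 + 1 := by nlinarith [hA, hB]
    have htgt1 : 1 < 1 - s := by nlinarith [sq_nonneg (1 - s)]
    have h5 : (α1 - (1 - s)) * (α1 ^ 2 + α1 * (1 - s) + (1 - s) ^ 2 - α1 - (1 - s)) = 0 := by
      linear_combination h1 - ht
    have h6 : α1 ^ 2 + α1 * (1 - s) + (1 - s) ^ 2 - α1 - (1 - s) > 0 := by nlinarith
    have hst : α1 = 1 - s := by
      rcases mul_eq_zero.mp h5 with h | h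
      · linarith
      · linarith
    constructor
    · simp only [hsdef] at hst; linarith
    · nlinarith [hA, hst]
  have hre2 : α2.re = (1 - α1) / 2 := hroot.1
  have hnsq : Complex.normSq α2 = α1 ^ 2 - α1 := hroot.2
  -- distinctness
  have h3im : α3.im = -α2.im := by rw [h23]; simp
  have hd12 : (α1 : ℂ) - α2 ≠ 0 := by
    intro h
    have : α2.im = 0 := by
      have := congrArg Complex.im h; simpa using this.symm
    exact h2im this
  have hd13 : (α1 : ℂ) - α3 ≠ 0 := by
    intro h
    have : α3.im = 0 := by
      have := congrArg Complex.im h; simpa using this.symm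
    rw [h3im] at this; exact h2im (by linarith)
  have hd23 : α2 - α3 ≠ 0 := by
    intro h
    have := congrArg Complex.im h
    simp [h3im] at this
    exact h2im this
  -- coefficients
  set A1 : ℂ := (α1 : ℂ) with hA1
  set a2 : ℂ := α2 / ((α2 - A1) * (α2 - α3)) with ha2
  set a3 : ℂ := α3 / ((α3 - A1) * (α3 - α2)) with ha3
  have hd21 : α2 - A1 ≠ 0 := fun h => hd12 (by rw [← neg_sub] at h; simpa using neg_eq_zero.mpr h)
  have hd31 : α3 - A1 ≠ 0 := fun h => hd13 (by rw [← neg_sub] at h; simpa using neg_eq_zero.mpr h)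
  have hd32 : α3 - α2 ≠ 0 := fun h => hd23 (by rw [← neg_sub] at h; simpa using neg_eq_zero.mpr h)
  -- Vieta: sum of roots
  have h2s : α2 + α3 = ((1 - α1 : ℝ) : ℂ) := by
    rw [h23, Complex.add_conj, hre2]; push_cast; ring
  have e1 : A1 + α2 + α3 = 1 := by
    rw [add_assoc, h2s, hA1]; push_cast; ring
  -- Lagrange identities
  have E0 : (a1 : ℂ) + a2 + a3 = 0 := by
    rw [ha1, ha2, ha3]
    field_simp
    ring
  have E1 : (a1 : ℂ) * A1 + a2 * α2 + a3 * α3 = 1 := by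
    rw [ha1, ha2, ha3]
    field_simp
    ring
  have E2 : (a1 : ℂ) * A1 ^ 2 + a2 * α2 ^ 2 + a3 * α3 ^ 2 = 1 := by
    have : (a1 : ℂ) * A1 ^ 2 + a2 * α2 ^ 2 + a3 * α3 ^ 2 = A1 + α2 + α3 := by
      rw [ha1, ha2, ha3]
      field_simp
      ring
    rw [this, e1]
  have h1c : A1 ^ 3 = A1 ^ 2 + 1 := by
    rw [hA1]; push_cast [← Complex.ofReal_pow]; exact_mod_cast congrArg (Complex.ofReal) h1
  have binet : ∀ n : ℕ, ((narayana n : ℕ) : ℂ) = (a1 : ℂ) * A1 ^ n + a2 * α2 ^ n + a3 * α3 ^ n :=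
    binet_aux A1 α2 α3 (a1 : ℂ) a2 a3 h1c h2 h3 E0 E1 E2
  -- conjugate coefficient
  have ha3c : a3 = starRingEnd ℂ a2 := by
    rw [ha2, ha3, h23, hA1]
    simp [map_div₀, map_mul, map_sub, Complex.conj_conj, Complex.conj_ofReal]
  set M : ℝ := ‖α2‖ with hM
  have hM2 : M ^ 2 = α1 ^ 2 - α1 := by rw [hM, Complex.sq_norm, hnsq]
  have hMnn : 0 ≤ M := norm_nonneg α2
  have hMpos : 0 < M := by nlinarith
  have hMinv : M ^ 2 = 1 / α1 := by rw [hM2]; field_simp; nlinarith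
  -- rpow computation
  have key : ∀ n : ℕ, α1 ^ (-(n : ℝ) / 2) = M ^ n := by
    intro n
    have hMr : M = α1 ^ ((-1 : ℝ) / 2) := by
      have hr2 : (α1 ^ ((-1 : ℝ) / 2)) ^ 2 = 1 / α1 := by
        rw [← Real.rpow_natCast (α1 ^ ((-1 : ℝ) / 2)) 2, ← Real.rpow_mul hpos.le]
        norm_num
        exact Real.rpow_neg_one α1
      have hrnn : 0 ≤ α1 ^ ((-1 : ℝ) / 2) := Real.rpow_nonneg hpos.le _
      nlinarith [hMinv, hr2]
    rw [hMr, ← Real.rpow_natCast (α1 ^ ((-1 : ℝ) / 2)) n, ← Real.rpow_mul hpos.le]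
    ring_nf
  -- the key strict bound 2|a2| < 1
  have hb2pos : 0 < α2.im ^ 2 := by positivity
  have hnsq21 : Complex.normSq (α2 - A1) = (α2.re - α1) ^ 2 + α2.im ^ 2 := by
    rw [hA1]
    simp [Complex.normSq_apply, Complex.sub_re, Complex.sub_im]
    ring
  have hnsq23 : Complex.normSq (α2 - α3) = 4 * α2.im ^ 2 := by
    rw [h23]
    simp [Complex.normSq_apply, Complex.sub_re, Complex.sub_im]
    ring
  have him2 : α2.im ^ 2 = α1 ^ 2 - α1 - ((1 - α1) / 2) ^ 2 := by
    have h := Complex.normSq_apply α2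
    rw [hnsq, hre2] at h
    nlinarith [h]
  have hna : Complex.normSq a2 =
      Complex.normSq α2 / (Complex.normSq (α2 - A1) * Complex.normSq (α2 - α3)) := by
    rw [ha2, map_div₀, map_mul]
  have hDpos : 0 < ((α2.re - α1) ^ 2 + α2.im ^ 2) * (4 * α2.im ^ 2) := by positivity
  have hineq : 4 * (α1 ^ 2 - α1) < ((α2.re - α1) ^ 2 + α2.im ^ 2) * (4 * α2.im ^ 2) := by
    rw [hre2, him2]
    nlinarith [hlb, hub, sq_nonneg (α1 - 1.465)]
  have hsq : (2 * ‖a2‖) ^ 2 < 1 ^ 2 := by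
    have h4 : 4 * Complex.normSq a2 < 1 := by
      rw [hna, hnsq, hnsq21, hnsq23]
      rw [show (4 : ℝ) * ((α1 ^ 2 - α1) / (((α2.re - α1) ^ 2 + α2.im ^ 2) * (4 * α2.im ^ 2))) =
          (4 * (α1 ^ 2 - α1)) / (((α2.re - α1) ^ 2 + α2.im ^ 2) * (4 * α2.im ^ 2)) by ring]
      rw [div_lt_one hDpos]
      exact hineq
    rw [mul_pow, Complex.sq_norm]
    nlinarith [h4]
  have h2a2 : 2 * ‖a2‖ < 1 :=
    lt_of_pow_lt_pow_left₀ 2 zero_le_one hsq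
  -- final estimate
  intro n _
  have hcast : (((narayana n : ℝ) - a1 * α1 ^ n : ℝ) : ℂ) = a2 * α2 ^ n + a3 * α3 ^ n := by
    push_cast
    rw [← hA1]
    linear_combination binet n
  have habs : |(narayana n : ℝ) - a1 * α1 ^ n| = ‖a2 * α2 ^ n + a3 * α3 ^ n‖ := by
    rw [← hcast, Complex.norm_real, Real.norm_eq_abs]
  have habs3 : ‖a3‖ = ‖a2‖ := by rw [ha3c, Complex.norm_conj]
  have habsα3 : ‖α3‖ = M := by rw [h23, Complex.norm_conj, hM]
  rw [habs, key n]
  calc ‖a2 * α2 ^ n + a3 * α3 ^ n‖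
      ≤ ‖a2 * α2 ^ n‖ + ‖a3 * α3 ^ n‖ := norm_add_le _ _
    _ = 2 * ‖a2‖ * M ^ n := by
        rw [norm_mul, norm_mul, norm_pow, norm_pow, habs3, habsα3, ← hM]; ring
    _ < 1 * M ^ n := by
        exact mul_lt_mul_of_pos_right h2a2 (pow_pos hMpos n)
    _ = M ^ n := one_mul _
end

section
/- The minimal polynomial over ℤ of a1 = α1/((α1-α2)(α1-α3)) is 31x^3 - 3x - 1, where α1 is the real root and α2, α3 the complex roots of x^3 - x^2 - 1. -/
open Polynomial in
theorem narayana_a1_minpoly (α1 : ℝ) (α2 α3 : ℂ)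
    (h1 : α1 ^ 3 = α1 ^ 2 + 1)
    (h2 : α2 ^ 3 = α2 ^ 2 + 1) (h3 : α3 ^ 3 = α3 ^ 2 + 1)
    (h2im : α2.im ≠ 0) (h23 : α3 = starRingEnd ℂ α2)
    (a1 : ℝ)
    (ha1 : (a1 : ℂ) = (α1 : ℂ) / (((α1 : ℂ) - α2) * ((α1 : ℂ) - α3))) :
    31 * a1 ^ 3 - 3 * a1 - 1 = 0 ∧
    minpoly ℚ a1 = X ^ 3 - C (3 / 31) * X - C (1 / 31) := by
  have hc1 : (α1 : ℂ) ^ 3 = (α1 : ℂ) ^ 2 + 1 := by exact_mod_cast h1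
  have h3im : α3.im = -α2.im := by rw [h23]; simp
  have hα2c : α2 ≠ (α1 : ℂ) := by
    intro h; apply h2im; rw [h]; simp
  have hα3c : α3 ≠ (α1 : ℂ) := by
    intro h; apply h2im
    have : α3.im = 0 := by rw [h]; simp
    rw [h3im] at this; linarith
  have hα23 : α2 ≠ α3 := by
    intro h; apply h2im
    have := congrArg Complex.im h
    rw [h3im] at this; linarith
  have q2 : α2 ^ 2 + ((α1 : ℂ) - 1) * α2 + ((α1 : ℂ) ^ 2 - (α1 : ℂ)) = 0 := by
    have hz : (α2 - (α1 : ℂ)) *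
        (α2 ^ 2 + ((α1 : ℂ) - 1) * α2 + ((α1 : ℂ) ^ 2 - (α1 : ℂ))) = 0 := by
      linear_combination h2 - hc1
    rcases mul_eq_zero.mp hz with h | h
    · exact absurd (sub_eq_zero.mp h) hα2c
    · exact h
  have q3 : α3 ^ 2 + ((α1 : ℂ) - 1) * α3 + ((α1 : ℂ) ^ 2 - (α1 : ℂ)) = 0 := by
    have hz : (α3 - (α1 : ℂ)) *
        (α3 ^ 2 + ((α1 : ℂ) - 1) * α3 + ((α1 : ℂ) ^ 2 - (α1 : ℂ))) = 0 := by
      linear_combination h3 - hc1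
    rcases mul_eq_zero.mp hz with h | h
    · exact absurd (sub_eq_zero.mp h) hα3c
    · exact h
  have hs : α2 + α3 = 1 - (α1 : ℂ) := by
    have hz : (α2 - α3) * (α2 + α3 + (α1 : ℂ) - 1) = 0 := by linear_combination q2 - q3
    rcases mul_eq_zero.mp hz with h | h
    · exact absurd (sub_eq_zero.mp h) hα23
    · linear_combination h
  have hprod : α2 * α3 = (α1 : ℂ) ^ 2 - (α1 : ℂ) := by
    linear_combination α2 * hs - q2
  have hden : ((α1 : ℂ) - α2) * ((α1 : ℂ) - α3) = (α1 : ℂ) * (3 * (α1 : ℂ) - 2) := by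
    linear_combination (-(α1 : ℂ)) * hs + hprod
  have hα1ne0 : α1 ≠ 0 := by intro h; rw [h] at h1; norm_num at h1
  have hα1ne23 : 3 * α1 - 2 ≠ 0 := by
    intro h
    have : α1 = 2 / 3 := by linarith
    rw [this] at h1; norm_num at h1
  have hcne : (α1 : ℂ) ≠ 0 := by exact_mod_cast hα1ne0
  have hcne2 : 3 * (α1 : ℂ) - 2 ≠ 0 := by
    intro h
    apply hα1ne23
    have : ((3 * α1 - 2 : ℝ) : ℂ) = 0 := by push_cast; linear_combination h
    exact_mod_cast this
  have eR : a1 * (3 * α1 - 2) = 1 := by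
    rw [hden] at ha1
    field_simp at ha1
    have h' : ((a1 : ℂ) * (3 * (α1 : ℂ) - 2)) * (α1 : ℂ) = 1 * (α1 : ℂ) := by
      rw [ha1, one_div, mul_comm (α1 : ℂ) 3, inv_mul_cancel₀ hcne2]
    have := mul_right_cancel₀ hcne h'
    exact_mod_cast this
  have part1 : 31 * a1 ^ 3 - 3 * a1 - 1 = 0 := by
    have key : (31 * a1 ^ 3 - 3 * a1 - 1) * (3 * α1 - 2) ^ 3 = 0 := by
      linear_combination (31 * ((a1 * (3 * α1 - 2)) ^ 2 + a1 * (3 * α1 - 2) + 1)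
        - 3 * (3 * α1 - 2) ^ 2) * eR - 27 * h1
    exact (mul_eq_zero.mp key).resolve_right (pow_ne_zero 3 hα1ne23)
  refine ⟨part1, ?_⟩
  set p : ℚ[X] := X ^ 3 - C (3 / 31) * X - C (1 / 31) with hp
  have hmonic : p.Monic := by unfold p; monicity!
  have hdeg : p.natDegree = 3 := by unfold p; compute_degree!
  have hroots : p.roots = 0 := by
    rw [Multiset.eq_zero_iff_forall_notMem]
    intro r hr
    rw [mem_roots hmonic.ne_zero] at hr
    have hre : r ^ 3 - 3 / 31 * r - 1 / 31 = 0 := by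
      have := hr
      simp [p, IsRoot, eval_sub, eval_mul, eval_pow] at this
      linarith
    have hq : (31 : ℚ) * r ^ 3 - 3 * r - 1 = 0 := by linarith
    set n : ℤ := r.num with hn
    set d : ℤ := (r.den : ℤ) with hd
    have hd0 : (0 : ℤ) < d := Int.natCast_pos.mpr r.pos
    have hdQ : ((d : ℚ)) ≠ 0 := by positivity
    have hrnd : (r : ℚ) = (n : ℚ) / (d : ℚ) := by
      rw [hn, hd]; exact_mod_cast (Rat.num_div_den r).symm
    have keyZ : 31 * n ^ 3 * d - d ^ 3 * (3 * n) - d ^ 3 * d = 0 := by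
      have : (31 : ℚ) * (n : ℚ) ^ 3 * d - (d : ℚ) ^ 3 * (3 * n) - (d : ℚ) ^ 3 * d = 0 := by
        rw [hrnd] at hq
        field_simp at hq
        linear_combination (d : ℚ) * hq
      exact_mod_cast this
    have key : 31 * n ^ 3 = 3 * n * d ^ 2 + d ^ 3 := by
      have h' : (31 * n ^ 3) * d = (3 * n * d ^ 2 + d ^ 3) * d := by linear_combination keyZ
      exact mul_right_cancel₀ (ne_of_gt hd0) h'
    have cop : IsCoprime n d := by
      rw [Int.isCoprime_iff_gcd_eq_one]
      simpa [Int.gcd, hn, hd] using r.reduced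
    have hnd : n ∣ d ^ 3 := ⟨31 * n ^ 2 - 3 * d ^ 2, by linear_combination -key⟩
    have hunit : IsUnit n := (cop.pow_right (n := 3)).isUnit_of_dvd' dvd_rfl hnd
    have hnval : n = 1 ∨ n = -1 := Int.isUnit_iff.mp hunit
    have hdd : d ∣ 31 := by
      have h31 : d ∣ 31 * n ^ 3 := ⟨3 * n * d + d ^ 2, by linear_combination key⟩
      exact (cop.symm.pow_right (n := 3)).dvd_of_dvd_mul_right h31
    have hdval : d = 1 ∨ d = 31 := by
      have h1' : d.natAbs ∣ 31 := by
        have := Int.natAbs_dvd_natAbs.mpr hdd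
        simpa using this
      have := (by norm_num : Nat.Prime 31).eq_one_or_self_of_dvd d.natAbs h1'
      omega
    rcases hnval with h' | h' <;> rcases hdval with h'' | h'' <;>
      rw [h', h''] at key <;> norm_num at key
  have hirr : Irreducible p :=
    (hmonic.irreducible_iff_roots_eq_zero_of_degree_le_three
      (by rw [hdeg]; norm_num) (by rw [hdeg])).mpr hroots
  have haeval : (aeval a1) p = 0 := by
    simp only [p, map_sub, map_mul, map_pow, aeval_X, aeval_C]
    push_cast
    norm_num
    linarith [part1]
  exact (minpoly.eq_of_irreducible_of_monic hirr haeval hmonic).symm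
end

section
/- If N_n equals the palindromic concatenation (1/9)(f1·10^{2u1+u2} − (f1−f2)·10^{u1+u2} + (f1−f2)·10^{u1} − f1) with digits f1 ≠ f2, f1 ≥ 1, u1, u2 ≥ 1, and n ≥ 3, then (2u1+u2)·log 10 − 2 < n·log α < (2u1+u2)·log 10 + 1, where α is the real root of x^3 - x^2 - 1. -/
open Real

theorem nonneg_of_narayana_recurrence {R : Type*} [AddCommMonoid R] [PartialOrder R]
    [IsOrderedAddMonoid R] {g : ℕ → R} (hg : ∀ k, g (k + 3) = g (k + 2) + g k) {m : ℕ}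
    (h₀ : 0 ≤ g m) (h₁ : 0 ≤ g (m + 1)) (h₂ : 0 ≤ g (m + 2)) {n : ℕ} (hn : m ≤ n) :
    0 ≤ g n := by
  have key : ∀ k, 0 ≤ g (m + k) ∧ 0 ≤ g (m + k + 1) ∧ 0 ≤ g (m + k + 2) := by
    intro k
    induction k with
    | zero => exact ⟨h₀, h₁, h₂⟩
    | succ k ih =>
      obtain ⟨ih₀, ih₁, ih₂⟩ := ih
      refine ⟨ih₁, ih₂, ?_⟩
      rw [show m + (k + 1) + 2 = m + k + 3 by ring, hg]
      exact add_nonneg ih₂ ih₀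
  obtain ⟨k, rfl⟩ := Nat.exists_eq_add_of_le hn
  exact (key k).1

section Root

variable {α : ℝ} (hα : α ^ 3 = α ^ 2 + 1)
include hα

theorem one_lt_of_cube_eq : 1 < α := by
  nlinarith [sq_nonneg α, sq_nonneg (α - 1)]

theorem seven_fifths_le_of_cube_eq : 7 / 5 ≤ α := by
  nlinarith [sq_nonneg (α - 7 / 5), sq_nonneg (α + 7 / 5)]

theorem le_twentytwo_fifteenths_of_cube_eq : α ≤ 22 / 15 := by
  nlinarith [sq_nonneg (α - 22 / 15), sq_nonneg (α + 22 / 15)]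

theorem pow_add_three_of_cube_eq (k : ℕ) : α ^ (k + 3) = α ^ (k + 2) + α ^ k := by
  rw [pow_add, hα]; ring

theorem mul_narayana_le_pow (n : ℕ) : α * narayana n ≤ α ^ n := by
  have hα₁ := one_lt_of_cube_eq hα
  refine sub_nonneg.mp (nonneg_of_narayana_recurrence (g := fun k => α ^ k - α * narayana k)
    (fun k => ?_) ?_ ?_ ?_ (Nat.zero_le n)) <;>
    simp [narayana, pow_add_three_of_cube_eq hα] <;> nlinarith

theorem two_fifths_mul_pow_le_narayana {n : ℕ} (hn : 4 ≤ n) : 2 / 5 * α ^ n ≤ narayana n := by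
  have hα₀ : 0 ≤ α := zero_le_one.trans (one_lt_of_cube_eq hα).le
  have hpow (k : ℕ) : α ^ k ≤ (22 / 15) ^ k :=
    pow_le_pow_left₀ hα₀ (le_twentytwo_fifteenths_of_cube_eq hα) k
  refine sub_nonneg.mp (nonneg_of_narayana_recurrence (g := fun k => narayana k - 2 / 5 * α ^ k)
    (fun k => ?_) ?_ ?_ ?_ hn)
  · simp only [narayana, Nat.cast_add, pow_add_three_of_cube_eq hα]; ring
  · have := hpow 4; norm_num [narayana] at this ⊢; linarith
  · have := hpow 5; norm_num [narayana] at this ⊢; linarith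
  · have := hpow 6; norm_num [narayana] at this ⊢; linarith

end Root

/-- With `A = 10 ^ u₁` and `B = 10 ^ u₂`, the palindrome is `9 N = f₁ (A²B - AB + A - 1) + f₂ A (B - 1)`. -/
theorem ten_pow_le_ten_mul_and_lt_ten_pow_of_palindrome {N : ℤ} {f₁ f₂ u₁ u₂ : ℕ}
    (hf₁ : 1 ≤ f₁) (hf₁' : f₁ ≤ 9) (hf₂ : f₂ ≤ 9) (hu₁ : 1 ≤ u₁)
    (h : 9 * N = f₁ * 10 ^ (2 * u₁ + u₂) - ((f₁ : ℤ) - f₂) * 10 ^ (u₁ + u₂) +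
      ((f₁ : ℤ) - f₂) * 10 ^ u₁ - f₁) :
    10 ^ (2 * u₁ + u₂) ≤ 10 * N ∧ N < 10 ^ (2 * u₁ + u₂) := by
  set A : ℤ := 10 ^ u₁
  set B : ℤ := 10 ^ u₂
  have hA : 10 ≤ A := le_self_pow₀ (by norm_num) (by omega)
  have hB : 1 ≤ B := one_le_pow₀ (by norm_num)
  rw [show (10 : ℤ) ^ (2 * u₁ + u₂) = A * A * B by ring,
    show (10 : ℤ) ^ (u₁ + u₂) = A * B by ring] at *
  have hf₁ℤ : (1 : ℤ) ≤ f₁ := by exact_mod_cast hf₁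
  have hf₁ℤ' : (f₁ : ℤ) ≤ 9 := by exact_mod_cast hf₁'
  have hf₂ℤ : (f₂ : ℤ) ≤ 9 := by exact_mod_cast hf₂
  have hAB : 0 ≤ A * (B - 1) := mul_nonneg (by linarith) (by linarith)
  have hAAB : 0 ≤ (A - 10) * B := mul_nonneg (by linarith) (by linarith)
  constructor
  · nlinarith [mul_nonneg hAB (Nat.cast_nonneg f₂ : (0 : ℤ) ≤ f₂),
      mul_nonneg hAAB (by linarith : (0 : ℤ) ≤ f₁ - 1), mul_nonneg hAB (by linarith : (0 : ℤ) ≤ f₁ - 1)]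
  · have hQ : 0 ≤ A * A * B - A * B + A - 1 := by nlinarith
    nlinarith [mul_nonneg hAB (by linarith : (0 : ℤ) ≤ 9 - f₂),
      mul_nonneg hQ (by linarith : (0 : ℤ) ≤ 9 - f₁)]

theorem sub_two_lt_mul_log_of_ten_pow_mul_le {α : ℝ} (hα : 7 / 5 ≤ α) {L n : ℕ}
    (h : 10 ^ L * α ≤ 10 * α ^ n) : L * log 10 - 2 < n * log α := by
  have hlog := log_le_log (by positivity) h
  rw [log_mul (by positivity) (by positivity), log_mul (by norm_num) (by positivity),
    log_pow, log_pow] at hlog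
  have h_ratio : log 10 - log α < 2 := by
    rw [← log_div (by norm_num) (by positivity), log_lt_iff_lt_exp (by positivity),
      show (2 : ℝ) = 1 + 1 by norm_num, exp_add]
    have he := exp_one_gt_d9
    calc 10 / α ≤ 10 / (7 / 5) := div_le_div_of_nonneg_left (by norm_num) (by norm_num) hα
      _ < exp 1 * exp 1 := by nlinarith
  linarith

theorem mul_log_lt_add_one_of_pow_lt {α : ℝ} (hα : 0 < α) {L n : ℕ}
    (h : 2 / 5 * α ^ n < 10 ^ L) : n * log α < L * log 10 + 1 := by
  have hlog := log_lt_log (by positivity) (show α ^ n < 5 / 2 * 10 ^ L by linarith)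
  rw [log_mul (by norm_num) (by positivity), log_pow, log_pow] at hlog
  have h_ratio : log (5 / 2) < 1 := by
    rw [log_lt_iff_lt_exp (by norm_num)]
    linarith [exp_one_gt_d9]
  linarith

theorem narayana_size_relation_general (α : ℝ) (hα : α ^ 3 = α ^ 2 + 1)
    (n u1 u2 f1 f2 : ℕ)
    (hf1 : 1 ≤ f1) (hf1' : f1 ≤ 9) (hf2 : f2 ≤ 9)
    (hu1 : 1 ≤ u1)
    (heq : (9 * narayana n : ℤ) =
      f1 * 10 ^ (2 * u1 + u2) - ((f1 : ℤ) - f2) * 10 ^ (u1 + u2) +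
      ((f1 : ℤ) - f2) * 10 ^ u1 - f1) :
    (2 * u1 + u2 : ℝ) * Real.log 10 - 2 < n * Real.log α ∧
    (n : ℝ) * Real.log α < (2 * u1 + u2 : ℝ) * Real.log 10 + 1 := by
  obtain ⟨hlo, hhi⟩ := ten_pow_le_ten_mul_and_lt_ten_pow_of_palindrome hf1 hf1' hf2 hu1 heq
  have hlo' : (10 : ℝ) ^ (2 * u1 + u2) ≤ 10 * narayana n := by exact_mod_cast hlo
  have hhi' : (narayana n : ℝ) < 10 ^ (2 * u1 + u2) := by exact_mod_cast hhi
  have hn : 4 ≤ n := by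
    have : (100 : ℤ) ≤ 10 ^ (2 * u1 + u2) := by
      calc (100 : ℤ) = 10 ^ 2 := by norm_num
        _ ≤ 10 ^ (2 * u1 + u2) := pow_le_pow_right₀ (by norm_num) (by omega)
    by_contra! h
    interval_cases n <;> simp [narayana] at hlo <;> omega
  have hα₀ : 0 < α := zero_lt_one.trans (one_lt_of_cube_eq hα)
  have hcast : ((2 * u1 + u2 : ℕ) : ℝ) = 2 * u1 + u2 := by push_cast; ring
  rw [← hcast]
  constructor
  · apply sub_two_lt_mul_log_of_ten_pow_mul_le (seven_fifths_le_of_cube_eq hα)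
    nlinarith [mul_narayana_le_pow hα n]
  · exact mul_log_lt_add_one_of_pow_lt hα₀ (by linarith [two_fifths_mul_pow_le_narayana hα hn])

theorem narayana_size_relation (α : ℝ) (hα : α ^ 3 = α ^ 2 + 1) (hαpos : 0 < α)
    (n u1 u2 f1 f2 : ℕ)
    (hf1 : 1 ≤ f1) (hf1' : f1 ≤ 9) (hf2 : f2 ≤ 9) (hne : f1 ≠ f2)
    (hu1 : 1 ≤ u1) (hu2 : 1 ≤ u2) (hn : 3 ≤ n)
    (heq : (9 * narayana n : ℤ) =
      f1 * 10 ^ (2 * u1 + u2) - ((f1 : ℤ) - f2) * 10 ^ (u1 + u2) +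
      ((f1 : ℤ) - f2) * 10 ^ u1 - f1) :
    (2 * u1 + u2 : ℝ) * Real.log 10 - 2 < n * Real.log α ∧
    (n : ℝ) * Real.log α < (2 * u1 + u2 : ℝ) * Real.log 10 + 1 :=
  narayana_size_relation_general α hα n u1 u2 f1 f2 hf1 hf1' hf2 hu1 heq
end

section
/- There do not exist a positive integer n and integers u1, u2 ≥ 1, digits 1 ≤ f1 ≤ 9, 0 ≤ f2 ≤ 9 with f1 ≠ f2, such that a1·α1^n = (f1/9)·10^{2u1+u2}, where α1 is the real root of x^3 - x^2 - 1 and a1 = α1/((α1-α2)(α1-α3)). -/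
/-- Rational root of a monic integer cubic is an integer. -/
lemma nv_int_root (r : ℚ) (a b c : ℤ) (h : r^3 + a*r^2 + b*r + c = 0) :
    ∃ m : ℤ, (m:ℚ) = r := by
  have hq : (r.den : ℚ) ≠ 0 := by exact_mod_cast r.den_nz
  have hp : (r.num : ℚ) = r * r.den := (div_eq_iff hq).mp (Rat.num_div_den r)
  have key : (r.num^3 + a*r.num^2*r.den + b*r.num*r.den^2 + c*r.den^3 : ℤ) = 0 := by
    have : ((r.num^3 + a*r.num^2*r.den + b*r.num*r.den^2 + c*r.den^3 : ℤ) : ℚ) = 0 := by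
      push_cast
      rw [hp]
      linear_combination (r.den:ℚ)^3 * h
    exact_mod_cast this
  have hdvd : (r.den : ℤ) ∣ r.num ^ 3 := by
    refine ⟨-(a*r.num^2 + b*r.num*r.den + c*r.den^2), ?_⟩
    linarith [key]
  have hcop : Nat.Coprime r.num.natAbs r.den := r.reduced
  have hdvd' : r.den ∣ r.num.natAbs ^ 3 := by
    have := Int.natAbs_dvd_natAbs.mpr hdvd
    simpa [Int.natAbs_pow] using this
  have hden1 : r.den = 1 :=
    Nat.Coprime.eq_one_of_dvd ((hcop.pow_left 3).symm) hdvd'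
  exact ⟨r.num, by rw [← Rat.num_div_den r, hden1]; simp⟩

lemma nv_no_rat_root1 (r : ℚ) : r^3 ≠ r^2 + 1 := by
  intro h
  obtain ⟨m, hm⟩ := nv_int_root r (-1) 0 (-1) (by push_cast; linarith)
  have hm' : m^3 = m^2 + 1 := by
    have : (m:ℚ)^3 = (m:ℚ)^2 + 1 := by rw [hm]; exact h
    exact_mod_cast this
  rcases le_or_gt m 1 with h1 | h1
  · nlinarith [sq_nonneg m]
  · nlinarith [sq_nonneg m]

lemma nv_no_rat_root2 (s : ℚ) : s^3 - 2*s^2 + s + 1 ≠ 0 := by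
  intro h
  obtain ⟨m, hm⟩ := nv_int_root s (-2) 1 1 (by push_cast; linarith)
  have hm' : m^3 - 2*m^2 + m + 1 = 0 := by
    have : (m:ℚ)^3 - 2*(m:ℚ)^2 + (m:ℚ) + 1 = 0 := by rw [hm]; exact h
    exact_mod_cast this
  rcases le_or_gt m 0 with h1 | h1
  · rcases le_or_gt m (-1) with h2 | h2
    · nlinarith [sq_nonneg m, sq_nonneg (m+1)]
    · interval_cases m
      omega
  · rcases le_or_gt 2 m with h2 | h2
    · nlinarith [sq_nonneg (m-1)]
    · interval_cases m
      omega

lemma nv_irrat (α : ℝ) (h1 : α^3 = α^2 + 1) (r : ℚ) : (r:ℝ) ≠ α := by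
  intro h
  apply nv_no_rat_root1 r
  have : ((r^3 : ℚ) : ℝ) = ((r^2 + 1 : ℚ) : ℝ) := by push_cast; rw [h]; exact h1
  exact_mod_cast this

lemma nv_lin_indep (α : ℝ) (h1 : α^3 = α^2 + 1) (b c d : ℚ)
    (h : (b:ℝ)*α^2 + (c:ℝ)*α + (d:ℝ) = 0) : b = 0 ∧ c = 0 ∧ d = 0 := by
  by_cases hb : b = 0
  · subst hb
    push_cast at h
    by_cases hc : c = 0
    · subst hc
      push_cast at h
      refine ⟨rfl, rfl, ?_⟩
      have : ((d:ℚ):ℝ) = ((0:ℚ):ℝ) := by push_cast; linarith [h]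
      exact_mod_cast this
    · exfalso
      apply nv_irrat α h1 (-d/c)
      have hc' : (c:ℝ) ≠ 0 := by exact_mod_cast hc
      push_cast
      field_simp
      linear_combination -h
  · exfalso
    have hb' : (b:ℝ) ≠ 0 := by exact_mod_cast hb
    set s : ℚ := -c/b with hs_def
    set t : ℚ := -d/b with ht_def
    have hs : α^2 = (s:ℝ)*α + (t:ℝ) := by
      rw [hs_def, ht_def]; push_cast
      field_simp
      linear_combination h
    have key : ((s^2 + t - s : ℚ):ℝ) * α = ((t + 1 - s*t : ℚ):ℝ) := by
      push_cast
      linear_combination (1 - (s:ℝ) - α) * hs + h1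
    by_cases hz : s^2 + t - s = 0
    · have hz' : ((s^2+t-s : ℚ):ℝ) = 0 := by exact_mod_cast hz
      rw [hz', zero_mul] at key
      have ht0 : t + 1 - s*t = 0 := by exact_mod_cast key.symm
      apply nv_no_rat_root2 s
      have ht : t = s - s^2 := by linarith [hz]
      rw [ht] at ht0
      linear_combination ht0
    · apply nv_irrat α h1 ((t + 1 - s*t)/(s^2 + t - s))
      have hz' : ((s^2+t-s : ℚ):ℝ) ≠ 0 := by exact_mod_cast hz
      push_cast
      push_cast at key hz'
      field_simp
      linear_combination -key

/-- Coefficients of `α^n` in the basis `1, α, α²` for `α³ = α² + 1`. -/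
def nvNar : ℕ → ℕ × ℕ × ℕ
  | 0 => (1, 0, 0)
  | n+1 => ((nvNar n).2.2, (nvNar n).1, (nvNar n).2.1 + (nvNar n).2.2)

lemma nv_pow (α : ℝ) (h1 : α^3 = α^2 + 1) :
    ∀ n, α^n = ((nvNar n).1 : ℝ) + ((nvNar n).2.1 : ℝ) * α + ((nvNar n).2.2 : ℝ) * α^2 := by
  intro n
  induction n with
  | zero => simp [nvNar]
  | succ n ih =>
    show α^(n+1) = _
    simp only [nvNar]
    push_cast
    linear_combination α * ih + ((nvNar n).2.2 : ℝ) * h1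

theorem narayana_nonvanishing (α1 : ℝ) (α2 α3 : ℂ)
    (h1 : α1 ^ 3 = α1 ^ 2 + 1)
    (h2 : α2 ^ 3 = α2 ^ 2 + 1) (h3 : α3 ^ 3 = α3 ^ 2 + 1)
    (h2im : α2.im ≠ 0) (h23 : α3 = starRingEnd ℂ α2)
    (a1 : ℝ)
    (ha1 : (a1 : ℂ) = (α1 : ℂ) / (((α1 : ℂ) - α2) * ((α1 : ℂ) - α3))) :
    ¬ ∃ (n u1 u2 f1 f2 : ℕ), 1 ≤ n ∧ 1 ≤ u1 ∧ 1 ≤ u2 ∧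
      1 ≤ f1 ∧ f1 ≤ 9 ∧ f2 ≤ 9 ∧ f1 ≠ f2 ∧
      a1 * α1 ^ n = (f1 : ℝ) / 9 * 10 ^ (2 * u1 + u2) := by
  have hα1 : 1 < α1 := by nlinarith [sq_nonneg α1, sq_nonneg (α1-1), sq_nonneg (α1+1)]
  have h1c : (α1:ℂ)^3 = (α1:ℂ)^2 + 1 := by exact_mod_cast congrArg (Complex.ofReal) h1
  have hne2 : (α1:ℂ) ≠ α2 := fun h => h2im (by rw [← h]; simp)
  have hne3 : (α1:ℂ) ≠ α3 := by
    intro h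
    apply h2im
    have := congrArg Complex.im h
    rw [h23] at this
    simp [Complex.conj_im, Complex.ofReal_im] at this
    linarith
  have hne23 : α2 ≠ α3 := by
    intro h
    rw [h23] at h
    have := congrArg Complex.im h
    simp [Complex.conj_im] at this
    exact h2im (by linarith)
  have E2 : α2^2 + α2*(α1:ℂ) + (α1:ℂ)^2 = α2 + (α1:ℂ) := by
    apply mul_left_cancel₀ (sub_ne_zero.mpr hne2.symm)
    linear_combination h2 - h1c
  have E3 : α3^2 + α3*(α1:ℂ) + (α1:ℂ)^2 = α3 + (α1:ℂ) := by
    apply mul_left_cancel₀ (sub_ne_zero.mpr hne3.symm)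
    linear_combination h3 - h1c
  have E23 : α2^2 + α2*α3 + α3^2 = α2 + α3 := by
    apply mul_left_cancel₀ (sub_ne_zero.mpr hne23)
    linear_combination h2 - h3
  have hu : α2 + α3 = 1 - (α1:ℂ) := by
    apply mul_left_cancel₀ (sub_ne_zero.mpr hne23)
    linear_combination E2 - E3
  have hv : α2*α3 = (α1:ℂ)^2 - (α1:ℂ) := by
    linear_combination -E23 + (α2 + α3 - (α1:ℂ)) * hu
  have hD : ((α1:ℂ) - α2) * ((α1:ℂ) - α3) = 3*(α1:ℂ)^2 - 2*(α1:ℂ) := by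
    linear_combination -(α1:ℂ)*hu + hv
  have hDne : (3*(α1:ℂ)^2 - 2*(α1:ℂ)) ≠ 0 := by
    have hr : (3*α1^2 - 2*α1 : ℝ) ≠ 0 := by nlinarith
    intro h
    apply hr
    exact_mod_cast (by push_cast at h ⊢; exact h : ((3*α1^2 - 2*α1 : ℝ):ℂ) = 0)
  have ha1c : (a1:ℂ) * (3*(α1:ℂ)^2 - 2*(α1:ℂ)) = (α1:ℂ) := by
    rw [ha1, hD, div_mul_cancel₀ _ hDne]
  have hre : a1 * (3*α1^2 - 2*α1) = α1 := by
    have := ha1c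
    push_cast at this
    exact_mod_cast this
  have hα1ne : α1 ≠ 0 := by linarith
  have ha1' : a1 * (3*α1 - 2) = 1 := by
    apply mul_right_cancel₀ hα1ne
    linear_combination hre
  rintro ⟨n, u1, u2, f1, f2, hn, hu1, hu2, hf1, hf19, hf2, hff, heq⟩
  set k := 2 * u1 + u2 with hk
  have h9 : 9 * α1^n = (f1:ℝ) * 10^k * (3*α1 - 2) := by
    linear_combination 9*(3*α1-2)*heq - 9*α1^n*ha1'
  have hpown := nv_pow α1 h1 n
  set A := (nvNar n).1
  set B := (nvNar n).2.1
  set C := (nvNar n).2.2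
  have hcoef := nv_lin_indep α1 h1 (9*(C:ℚ)) (9*(B:ℚ) - 3*(f1:ℚ)*10^k)
    (9*(A:ℚ) + 2*(f1:ℚ)*10^k) (by
      push_cast
      linear_combination h9 - 9*hpown)
  have hd : 9*(A:ℚ) + 2*(f1:ℚ)*10^k = 0 := hcoef.2.2
  have hA : (0:ℚ) ≤ (A:ℚ) := by positivity
  have hf1' : (1:ℚ) ≤ (f1:ℚ) := by exact_mod_cast hf1
  have h10 : (0:ℚ) < 10^k := by positivity
  nlinarith [hd, hA, hf1', h10]
end

section
/- For real numbers x, T > 0 and integer m ≥ 1, if T > (4m^2)^m and x/(log x)^m < T (with x > e so log x > 1), then x < 2^m · T · (log T)^m. -/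
/-!
Since `x < T (log x)^m`, either `log x ≤ 2 log T`, which gives the bound at once, or
`log T < (log x)/2`. In the latter case taking logarithms gives `log x < 2m log log x`, and
comparing `log` with its tangent line at `4m` turns this into `log x < 4m log(2m)`; then
`log T < 2m log(2m) = log((4m²)^m)`, contradicting `T > (4m²)^m`.
-/

open Real

theorem Real.log_le_log_add_div_sub_one {a y : ℝ} (ha : 0 < a) (hy : 0 < y) :
    log y ≤ log a + y / a - 1 := by
  have h := log_le_sub_one_of_pos (div_pos hy ha)
  rw [log_div hy.ne' ha.ne'] at h
  linarith

theorem Real.lt_two_mul_mul_log_of_lt_mul_log {c L : ℝ} (hc : 0 ≤ c) (hL : 0 < L)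
    (h : L < c * log L) : L < 2 * c * log c := by
  obtain rfl | hc := hc.eq_or_lt
  · linarith
  have htangent := log_le_log_add_div_sub_one (mul_pos two_pos hc) hL
  rw [log_mul two_ne_zero hc.ne'] at htangent
  have hhalf : c * (L / (2 * c)) = L / 2 := by field_simp
  -- `c` times the tangent bound at `2c` gives `L < c (log 2 + log c - 1) + L / 2`, and `log 2 < 1`.
  nlinarith [log_two_lt_d9]

theorem guzman_luca_general (m : ℕ) (x T : ℝ)
    (hT2 : (4 * (m : ℝ) ^ 2) ^ m < T)
    (hx : Real.exp 1 < x)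
    (hxT : x / (Real.log x) ^ m < T) :
    x < 2 ^ m * T * (Real.log T) ^ m := by
  have hx0 : 0 < x := (exp_pos 1).trans hx
  have hL : 1 < log x := (lt_log_iff_exp_lt hx0).2 hx
  have hT : 0 < T := lt_of_le_of_lt (by positivity) hT2
  have hxT' : x < T * log x ^ m := (div_lt_iff₀ (by positivity)).1 hxT
  by_cases hsmall : log x ≤ 2 * log T
  · calc x < T * log x ^ m := hxT'
      _ ≤ T * (2 * log T) ^ m := by gcongr
      _ = 2 ^ m * T * log T ^ m := by ring
  · have hlog : log x < log T + m * log (log x) := by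
      have := log_lt_log hx0 hxT'
      rwa [log_mul hT.ne' (by positivity), log_pow] at this
    have hbound := lt_two_mul_mul_log_of_lt_mul_log (c := 2 * m) (L := log x) (by positivity)
      (by linarith) (by linarith)
    have hTlog : log ((4 * (m : ℝ) ^ 2) ^ m) = 2 * m * log (2 * m) := by
      rw [log_pow, show 4 * (m : ℝ) ^ 2 = (2 * m) ^ 2 by ring, log_pow]
      push_cast
      ring
    have hpos : 0 < (4 * (m : ℝ) ^ 2) ^ m := by rcases m with _ | m <;> positivity
    have hlogT := log_lt_log hpos hT2
    linarith

theorem guzman_luca (m : ℕ) (hm : 1 ≤ m) (x T : ℝ) (hT : 0 < T)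
    (hT2 : (4 * (m : ℝ) ^ 2) ^ m < T)
    (hx : Real.exp 1 < x)
    (hxT : x / (Real.log x) ^ m < T) :
    x < 2 ^ m * T * (Real.log T) ^ m :=
  guzman_luca_general m x T hT2 hx hxT
end

section
/- If n > 500 and N_n = (1/9)(f1·10^{2u1+u2} − (f1−f2)·10^{u1+u2} + (f1−f2)·10^{u1} − f1) with digits f1 ≠ f2, f1 ≥ 1, u1, u2 ≥ 1, then |9·a1·α1^n − f1·10^{2u1+u2}| < 27·10^{u1+u2}, where α1 is the real root of x^3−x^2−1 and a1 = α1/((α1−α2)(α1−α3)). -/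
set_option maxHeartbeats 1000000

theorem narayana_step1_bound (α1 : ℝ) (α2 α3 : ℂ)
    (h1 : α1 ^ 3 = α1 ^ 2 + 1)
    (h2 : α2 ^ 3 = α2 ^ 2 + 1) (h3 : α3 ^ 3 = α3 ^ 2 + 1)
    (h2im : α2.im ≠ 0) (h23 : α3 = starRingEnd ℂ α2)
    (a1 : ℝ)
    (ha1 : (a1 : ℂ) = (α1 : ℂ) / (((α1 : ℂ) - α2) * ((α1 : ℂ) - α3)))
    (n u1 u2 f1 f2 : ℕ)
    (hf1 : 1 ≤ f1) (hf1' : f1 ≤ 9) (hf2 : f2 ≤ 9) (hne : f1 ≠ f2)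
    (hu1 : 1 ≤ u1) (hu2 : 1 ≤ u2) (hn : 500 < n)
    (heq : (9 * narayana n : ℤ) =
      f1 * 10 ^ (2 * u1 + u2) - ((f1 : ℤ) - f2) * 10 ^ (u1 + u2) +
      ((f1 : ℤ) - f2) * 10 ^ u1 - f1) :
    |9 * a1 * α1 ^ n - (f1 : ℝ) * 10 ^ (2 * u1 + u2)| <
      27 * 10 ^ (u1 + u2) := by
  set A1 : ℂ := (α1 : ℂ) with hA1
  have h1c : A1 ^ 3 = A1 ^ 2 + 1 := by rw [hA1]; exact_mod_cast h1
  have h12 : A1 ≠ α2 := by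
    intro h; apply h2im; rw [← h]; simp [hA1]
  have h13 : A1 ≠ α3 := by
    intro h; apply h2im; rw [h23] at h
    have := congrArg Complex.im h
    simpa [hA1] using this
  have h23' : α2 ≠ α3 := by
    intro h; apply h2im; rw [h23] at h
    have := congrArg Complex.im h
    simp at this; linarith
  have d12 : A1 - α2 ≠ 0 := sub_ne_zero.mpr h12
  have d13 : A1 - α3 ≠ 0 := sub_ne_zero.mpr h13
  have d23 : α2 - α3 ≠ 0 := sub_ne_zero.mpr h23'
  have d21 : α2 - A1 ≠ 0 := sub_ne_zero.mpr (Ne.symm h12)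
  have d31 : α3 - A1 ≠ 0 := sub_ne_zero.mpr (Ne.symm h13)
  have d32 : α3 - α2 ≠ 0 := sub_ne_zero.mpr (Ne.symm h23')
  have dD : (A1 - α2) * (A1 - α3) * (α2 - α3) ≠ 0 := mul_ne_zero (mul_ne_zero d12 d13) d23
  have key1 : (A1 - α2) * (A1 - α3) * (α2 - α3) * (A1 + α2 + α3 - 1) = 0 := by
    linear_combination (α2 - α3) * h1c + (α3 - A1) * h2 + (A1 - α2) * h3
  have he1 : A1 + α2 + α3 = 1 := by
    have := (mul_eq_zero.mp key1).resolve_left dD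
    linear_combination this
  have key3 : (A1 - α2) * (A1 - α3) * (α2 - α3) * (A1 * α2 * α3 - 1) = 0 := by
    linear_combination (α2^2*α3 - α2*α3^2) * h1c + (A1*α3^2 - A1^2*α3) * h2 + (A1^2*α2 - A1*α2^2) * h3
  have he3 : A1 * α2 * α3 = 1 := by
    have := (mul_eq_zero.mp key3).resolve_left dD
    linear_combination this
  -- Binet
  set a2 : ℂ := α2 / ((α2 - A1) * (α2 - α3)) with ha2
  set a3 : ℂ := α3 / ((α3 - A1) * (α3 - α2)) with ha3
  have base0 : (a1 : ℂ) + a2 + a3 = 0 := by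
    rw [ha1, ha2, ha3]; field_simp; ring
  have base1 : (a1 : ℂ) * A1 + a2 * α2 + a3 * α3 = 1 := by
    rw [ha1, ha2, ha3]; field_simp; ring
  have base1' : (A1 : ℂ) / ((A1 - α2) * (A1 - α3)) * A1 + α2 / ((α2 - A1) * (α2 - α3)) * α2 +
      α3 / ((α3 - A1) * (α3 - α2)) * α3 = 1 := by
    rw [← ha1, ← ha2, ← ha3]; exact base1
  have hbsum : 1 / ((A1 - α2) * (A1 - α3)) + 1 / ((α2 - A1) * (α2 - α3)) +
      1 / ((α3 - A1) * (α3 - α2)) = 0 := by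
    field_simp
    ring
  have base2 : (a1 : ℂ) * A1 ^ 2 + a2 * α2 ^ 2 + a3 * α3 ^ 2 = 1 := by
    rw [ha1, ha2, ha3]
    linear_combination base1' + hbsum + (1 / ((A1 - α2) * (A1 - α3))) * h1c +
      (1 / ((α2 - A1) * (α2 - α3))) * h2 + (1 / ((α3 - A1) * (α3 - α2))) * h3
  have binet : ∀ m : ℕ, (narayana m : ℂ) = a1 * A1 ^ m + a2 * α2 ^ m + a3 * α3 ^ m := by
    intro m
    induction m using Nat.strong_induction_on with
    | _ m ih =>
      rcases m with _ | _ | _ | k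
      · simpa [narayana] using base0.symm
      · simpa [narayana] using base1.symm
      · simpa [narayana] using base2.symm
      · have e1 := ih (k + 2) (by omega)
        have e0 := ih k (by omega)
        simp only [narayana, Nat.cast_add]
        rw [e1, e0]
        linear_combination -((a1 : ℂ) * A1 ^ k) * h1c - a2 * α2 ^ k * h2 - a3 * α3 ^ k * h3
  have ha3conj : a3 = starRingEnd ℂ a2 := by
    rw [ha2, ha3, h23]
    simp [map_div₀, map_mul, map_sub, Complex.conj_conj, Complex.conj_ofReal, hA1]
  have hre : ∀ m : ℕ, (narayana m : ℝ) = a1 * α1 ^ m + 2 * (a2 * α2 ^ m).re := by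
    intro m
    have hb := binet m
    rw [ha3conj, h23, ← map_pow, ← map_mul, add_assoc, Complex.add_conj] at hb
    rw [hA1] at hb
    exact_mod_cast hb
  -- numeric bounds on α1
  have hl : (1.4 : ℝ) < α1 := by nlinarith [sq_nonneg (α1 - 1.4), sq_nonneg (α1 + 1), sq_nonneg α1]
  have hr' : α1 < 1.5 := by nlinarith [sq_nonneg (α1 - 1.5), sq_nonneg (α1 + 1), sq_nonneg α1]
  have hx : α1 + 2 * α2.re = 1 := by
    have := congrArg Complex.re he1
    simp only [hA1, h23, Complex.add_re, Complex.ofReal_re, Complex.conj_re, Complex.one_re] at this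
    linarith
  have h4 : α1 * Complex.normSq α2 = 1 := by
    have h' : A1 * (α2 * α3) = 1 := by rw [← mul_assoc]; exact he3
    rw [h23, Complex.mul_conj] at h'
    rw [hA1] at h'
    exact_mod_cast h'
  have hxy : α1 * (α2.re ^ 2 + α2.im ^ 2) = 1 := by
    rw [Complex.normSq_apply] at h4; linear_combination h4
  have hy2 : (0.6 : ℝ) ≤ α2.im ^ 2 := by nlinarith [hxy, hx, hl, hr', sq_nonneg (α1 - 1.4), sq_nonneg (α1 - 1.5)]
  have habs2 : ‖α2‖ ≤ 1 := by
    have h5 : Complex.normSq α2 ≤ 1 := by nlinarith [h4, hl]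
    have h6 := Complex.sq_norm α2
    nlinarith [norm_nonneg α2]
  have hn2 : Complex.normSq a2 ≤ 1 := by
    rw [ha2, Complex.normSq_div, Complex.normSq_mul]
    have p1 : 0 < Complex.normSq (α2 - A1) := Complex.normSq_pos.mpr d21
    have p2 : 0 < Complex.normSq (α2 - α3) := Complex.normSq_pos.mpr d23
    rw [div_le_one (by positivity)]
    have e21 : Complex.normSq (α2 - A1) = (α2.re - α1) ^ 2 + α2.im ^ 2 := by
      simp [Complex.normSq_apply, hA1]; ring
    have e23 : Complex.normSq (α2 - α3) = 4 * α2.im ^ 2 := by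
      simp [h23, Complex.normSq_apply]; ring
    rw [e21, e23, Complex.normSq_apply]
    have h6 : (2.5 : ℝ) ≤ (α2.re - α1) ^ 2 := by nlinarith [hx, hl]
    have h7 : α2.re ^ 2 + α2.im ^ 2 ≤ 0.72 := by nlinarith [hxy, hl]
    have h8 : ((α2.re - α1) ^ 2 + α2.im ^ 2) * (4 * α2.im ^ 2) ≥ (2.5 + 0.6) * (4 * 0.6) := by
      nlinarith [h6, hy2]
    nlinarith [h7, h8]
  have habsa2 : ‖a2‖ ≤ 1 := by
    have h6 := Complex.sq_norm a2
    nlinarith [norm_nonneg a2]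
  have hzre : |(a2 * α2 ^ n).re| ≤ 1 := by
    refine le_trans (Complex.abs_re_le_norm _) ?_
    rw [norm_mul, norm_pow]
    have := pow_le_one₀ (norm_nonneg α2) habs2 (n := n)
    nlinarith [norm_nonneg a2, pow_nonneg (norm_nonneg α2) n]
  have hNr := hre n
  have heqR : 9 * (narayana n : ℝ) = f1 * 10 ^ (2 * u1 + u2) - ((f1 : ℝ) - f2) * 10 ^ (u1 + u2) +
      ((f1 : ℝ) - f2) * 10 ^ u1 - f1 := by exact_mod_cast heq
  have hX : (100 : ℝ) ≤ 10 ^ (u1 + u2) := by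
    calc (100 : ℝ) = 10 ^ 2 := by norm_num
    _ ≤ 10 ^ (u1 + u2) := pow_le_pow_right₀ (by norm_num) (by omega)
  have hX1 : (10 : ℝ) ^ u1 ≤ 10 ^ (u1 + u2) := pow_le_pow_right₀ (by norm_num) (by omega)
  have hf1R : (f1 : ℝ) ≤ 9 := by exact_mod_cast hf1'
  have hf2R : (f2 : ℝ) ≤ 9 := by exact_mod_cast hf2
  have hf1R0 : (0 : ℝ) ≤ f1 := Nat.cast_nonneg f1
  have hf2R0 : (0 : ℝ) ≤ f2 := Nat.cast_nonneg f2
  have hd : |((f1 : ℝ) - f2)| ≤ 9 := abs_le.mpr ⟨by linarith, by linarith⟩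
  have hp1 : |((f1 : ℝ) - f2) * 10 ^ (u1 + u2)| ≤ 9 * 10 ^ (u1 + u2) := by
    rw [abs_mul, abs_of_pos (by positivity : (0:ℝ) < 10 ^ (u1 + u2))]
    exact mul_le_mul_of_nonneg_right hd (by positivity)
  have hp2 : |((f1 : ℝ) - f2) * 10 ^ u1| ≤ 9 * 10 ^ (u1 + u2) := by
    rw [abs_mul, abs_of_pos (by positivity : (0:ℝ) < 10 ^ u1)]
    calc |((f1 : ℝ) - f2)| * 10 ^ u1 ≤ 9 * 10 ^ u1 :=
          mul_le_mul_of_nonneg_right hd (by positivity)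
    _ ≤ 9 * 10 ^ (u1 + u2) := by linarith
  have hq1 := abs_le.mp hp1
  have hq2 := abs_le.mp hp2
  have hz' := abs_le.mp hzre
  rw [abs_lt]
  constructor <;> linarith [hNr, heqR, hX, hq1.1, hq1.2, hq2.1, hq2.2, hz'.1, hz'.2]
end
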